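/- For any biconed graph G^{A,B}, the collection of 2-edge-rooted forests of G^{A,B}_red is a multicomplex on the edge set of G^{A,B}_red: if (F, m) is a 2-edge-rooted forest and one copy of one edge is removed from the multiset (F, m), the resulting multiset is again a 2-edge-rooted forest. -/

import Mathlib

/-!
Formalization scaffold for "h-vectors of graphic matroids of biconed graphs".

A graph `G` (loops and parallel edges allowed) with vertex set `A ∪ B` is
modelled by an abstract finite edge type `E` with an endpoint map
`ends : E → Sym2 (Fin m ⊕ₗ Fin n)`, where `A = Fin m = {1,…,m}`,
`Ā = B \ A = Fin n = {1̄,…,n̄}` and the finset `S ⊆ Fin m` records `A ∩ B`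
(so `B = S ∪ Ā`).  The biconing `G^{A,B}` adds the two vertices `0` and `0̄`
and the edges `00̄`, `0a (a ∈ A)` and `0̄b (b ∈ B)`.
-/

namespace BiconedPaper

noncomputable section
open scoped Classical

/-! ### Walks in multigraphs presented by an endpoint map -/

/-- A walk in the multigraph with edge set `ε` and endpoint map `ends`. -/
inductive MWalk {ε ν : Type} (ends : ε → Sym2 ν) : ν → ν → Type
  | nil (u : ν) : MWalk ends u u
  | cons {u w : ν} (e : ε) (v : ν) (h : ends e = s(u, v)) (p : MWalk ends v w) :
      MWalk ends u w

namespace MWalk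

variable {ε ν : Type} {ends : ε → Sym2 ν}

/-- The list of edges traversed by a walk. -/
def edges : ∀ {u v : ν}, MWalk ends u v → List ε
  | _, _, nil _ => []
  | _, _, cons e _ _ p => e :: p.edges

/-- The list of vertices visited by a walk. -/
def support : ∀ {u v : ν}, MWalk ends u v → List ν
  | u, _, nil _ => [u]
  | u, _, cons _ _ _ p => u :: p.support

/-- A walk is a path if it visits no vertex twice. -/
def IsPath {u v : ν} (p : MWalk ends u v) : Prop := p.support.Nodup

/-- All edges of the walk belong to the edge set `F`. -/
def edgesIn {u v : ν} (p : MWalk ends u v) (F : Finset ε) : Prop :=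
  ∀ e ∈ p.edges, e ∈ F

/-- The number of "bridging" edges traversed by a walk, i.e. steps whose two
endpoints lie on different sides according to `sideF`. -/
def bridgeCount (sideF : ν → Bool) : ∀ {u v : ν}, MWalk ends u v → ℕ
  | _, _, nil _ => 0
  | u, _, cons _ v' _ p => (if sideF u = sideF v' then 0 else 1) + p.bridgeCount sideF

end MWalk

/-- `u` and `v` are joined by a walk all of whose edges lie in `F`. -/
def Reachable {ε ν : Type} (ends : ε → Sym2 ν) (F : Finset ε) (u v : ν) : Prop :=
  ∃ p : MWalk ends u v, p.edgesIn F

/-- An edge set is acyclic (a forest) iff removing any one of its edges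
disconnects the endpoints of that edge.  (In particular no loops and no
parallel pairs.) -/
def IsAcyclic {ε ν : Type} [DecidableEq ε] (ends : ε → Sym2 ν) (F : Finset ε) : Prop :=
  ∀ e ∈ F, ∀ u v : ν, ends e = s(u, v) → ¬ Reachable ends (F.erase e) u v

/-- A spanning tree: an acyclic edge set connecting every pair of vertices. -/
def IsSpanningTree {ε ν : Type} [DecidableEq ε] (ends : ε → Sym2 ν) (T : Finset ε) : Prop :=
  IsAcyclic ends T ∧ ∀ u v : ν, Reachable ends T u v

/-! ### Biconed graphs -/

/-- The data of a biconed graph `G^{A,B}`:  the graph `G` has vertex set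
`A ∪ B` with `A = Fin m`, `Ā = B \ A = Fin n`, `A ∩ B = S`, and abstract
edge set `E` (so loops and parallel edges are allowed). -/
structure BiconedGraph where
  m : ℕ
  n : ℕ
  E : Type
  fintypeE : Fintype E
  decEqE : DecidableEq E
  ends : E → Sym2 (Fin m ⊕ₗ Fin n)
  S : Finset (Fin m)

namespace BiconedGraph

variable (P : BiconedGraph)

instance : Fintype P.E := P.fintypeE
instance : DecidableEq P.E := P.decEqE

/-- The vertices of `G`, linearly ordered `1 < ⋯ < m < 1̄ < ⋯ < n̄`. -/
abbrev VG := Fin P.m ⊕ₗ Fin P.n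

/-- The vertices of `G^{A,B}_red`:  `⊥` is the vertex `0̄`, ordered
`0̄ < 1 < ⋯ < m < 1̄ < ⋯ < n̄`. -/
abbrev Vred := WithBot P.VG

/-- The vertices of `G^{A,B}`: `⊥` is `0`, ordered `0 < 0̄ < 1 < ⋯ < n̄`. -/
abbrev W := WithBot P.Vred

/-- The vertex `a ∈ A`. -/
def aVert (a : Fin P.m) : P.VG := toLex (Sum.inl a)
/-- The vertex `b ∈ Ā`. -/
def bVert (b : Fin P.n) : P.VG := toLex (Sum.inr b)
/-- Inclusion of the vertices of `G` into those of `G^{A,B}_red`. -/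
def liftV (x : P.VG) : P.Vred := (x : WithBot P.VG)
/-- Inclusion of the vertices of `G^{A,B}_red` into those of `G^{A,B}`. -/
def liftW (x : P.Vred) : P.W := (x : WithBot P.Vred)

/-- The edges of the biconed graph `G^{A,B}`:  the edge `00̄`, the coning
edges `0a (a ∈ A)`, `0̄b (b ∈ Ā)`, `0̄a (a ∈ A ∩ B)`, and the edges of `G`. -/
abbrev EB := Unit ⊕ (Fin P.m ⊕ (Fin P.n ⊕ ({a : Fin P.m // a ∈ P.S} ⊕ P.E)))

/-- The edge `00̄`. -/
abbrev e00 : P.EB := Sum.inl ()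
/-- The coning edge `0a`, `a ∈ A`. -/
abbrev eA (a : Fin P.m) : P.EB := Sum.inr (Sum.inl a)
/-- The coning edge `0̄b`, `b ∈ Ā`. -/
abbrev eB (b : Fin P.n) : P.EB := Sum.inr (Sum.inr (Sum.inl b))
/-- The coning edge `0̄a`, `a ∈ A ∩ B`. -/
abbrev eS (a : {a : Fin P.m // a ∈ P.S}) : P.EB := Sum.inr (Sum.inr (Sum.inr (Sum.inl a)))
/-- An original edge of `G`. -/
abbrev eG (e : P.E) : P.EB := Sum.inr (Sum.inr (Sum.inr (Sum.inr e)))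

/-- The endpoint map of `G^{A,B}`. -/
def endsB : P.EB → Sym2 P.W
  | Sum.inl _ => s((⊥ : P.W), P.liftW ⊥)
  | Sum.inr (Sum.inl a) => s((⊥ : P.W), P.liftW (P.liftV (P.aVert a)))
  | Sum.inr (Sum.inr (Sum.inl b)) => s(P.liftW ⊥, P.liftW (P.liftV (P.bVert b)))
  | Sum.inr (Sum.inr (Sum.inr (Sum.inl a))) => s(P.liftW ⊥, P.liftW (P.liftV (P.aVert a.1)))
  | Sum.inr (Sum.inr (Sum.inr (Sum.inr e))) => (P.ends e).map fun x => P.liftW (P.liftV x)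

/-- The spanning tree `T₀`, consisting of `00̄`, the edges `0a (a ∈ A)` and
the edges `0̄b (b ∈ Ā)`. -/
def T0 : Finset P.EB :=
  Finset.univ.filter fun e => match e with
    | Sum.inl _ => True
    | Sum.inr (Sum.inl _) => True
    | Sum.inr (Sum.inr (Sum.inl _)) => True
    | _ => False

/-- The edges of `G^{A,B}_red` (delete the edges of `T₀` and the vertex `0`):
the edges `0̄a (a ∈ A ∩ B)` together with the edges of `G`. -/
abbrev Ered := {a : Fin P.m // a ∈ P.S} ⊕ P.E

/-- The endpoint map of `G^{A,B}_red`; `⊥` is the vertex `0̄`. -/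
def endsRed : P.Ered → Sym2 P.Vred
  | Sum.inl a => s((⊥ : P.Vred), P.liftV (P.aVert a.1))
  | Sum.inr e => (P.ends e).map P.liftV

/-- Inclusion of the edges of `G^{A,B}_red` into those of `G^{A,B}`. -/
def redToEB : P.Ered → P.EB
  | Sum.inl a => P.eS a
  | Sum.inr e => P.eG e

/-- The edge set `T \ T₀` of `T`, viewed inside `G^{A,B}_red`. -/
def redOf (T : Finset P.EB) : Finset P.Ered :=
  Finset.univ.filter fun e => P.redToEB e ∈ T

/-- `true` on the vertices of `A`, `false` on the vertices of `Ā ∪ {0̄}`. -/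
def side : P.Vred → Bool :=
  WithBot.recBotCoe false fun x => Sum.elim (fun _ => true) (fun _ => false) (ofLex x)

/-- The vertex lies in `A`. -/
def InA (v : P.Vred) : Prop := ∃ a : Fin P.m, v = P.liftV (P.aVert a)

/-- An edge of `G^{A,B}_red` is bridging if it joins a vertex of `A` to a
vertex of `Ā ∪ {0̄}`. -/
def BridgingE (e : P.Ered) : Prop :=
  ∃ u v : P.Vred, P.endsRed e = s(u, v) ∧ P.side u ≠ P.side v

/-! ### 2-edge-rooted forests -/

/-- The underlying edge set `F` of the multiset of edges given by the
multiplicity function `mult` (an edge `e` carries `mult e - 1` edge roots). -/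
def mSupport (mult : P.Ered → ℕ) : Finset P.Ered :=
  Finset.univ.filter fun e => mult e ≠ 0

/-- The degree of the multiset of edges given by `mult`. -/
def deg (mult : P.Ered → ℕ) : ℕ := ∑ e : P.Ered, mult e

/-- Edge `e` meets the connected component of `v` in the edge set `F`. -/
def Touches (F : Finset P.Ered) (v : P.Vred) (e : P.Ered) : Prop :=
  ∃ u : P.Vred, u ∈ P.endsRed e ∧ Reachable P.endsRed F v u

/-- The total number of edge roots in the component of `v`. -/
def compEdgeRoots (mult : P.Ered → ℕ) (v : P.Vred) : ℕ :=
  ∑ e ∈ P.mSupport mult, if P.Touches (P.mSupport mult) v e then mult e - 1 else 0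

/-- The component of `v` is `compCount`-edge-rooted:  the number of its edge
roots, plus `1` if it contains the vertex `0̄`. -/
def compCount (mult : P.Ered → ℕ) (v : P.Vred) : ℕ :=
  P.compEdgeRoots mult v +
    if Reachable P.endsRed (P.mSupport mult) v (⊥ : P.Vred) then 1 else 0

/-- Condition (C3) for the `2`-edge-rooted component of `v`:  the unique
shortest path containing both edge roots (resp. the vertex `0̄` and the edge
root, if the component contains `0̄`) has an odd number of bridging edges.
The shortest path containing two edges is the unique path whose first and
last edges are the two rooted edges; if the two edge roots lie on one common
edge (`mult e = 3`) the path is that single edge. -/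
def C3At (mult : P.Ered → ℕ) (v : P.Vred) : Prop :=
  (Reachable P.endsRed (P.mSupport mult) v (⊥ : P.Vred) →
    ∃ (x : P.Vred) (p : MWalk P.endsRed (⊥ : P.Vred) x),
      p.IsPath ∧ p.edgesIn (P.mSupport mult) ∧
      (∃ e, p.edges.getLast? = some e ∧ 2 ≤ mult e) ∧
      Odd (p.bridgeCount P.side)) ∧
  (¬ Reachable P.endsRed (P.mSupport mult) v (⊥ : P.Vred) →
    ∃ (x y : P.Vred) (p : MWalk P.endsRed x y),
      p.IsPath ∧ p.edgesIn (P.mSupport mult) ∧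
      Reachable P.endsRed (P.mSupport mult) v x ∧
      (∃ e, p.edges.head? = some e ∧ 2 ≤ mult e) ∧
      (∃ e, p.edges.getLast? = some e ∧ 2 ≤ mult e) ∧
      (∀ e, p.edges = [e] → mult e = 3) ∧
      Odd (p.bridgeCount P.side))

/-- `mult : Ered → ℕ` is (the multiplicity function of) a 2-edge-rooted
forest of `G^{A,B}_red`:
(C0) its support is a spanning forest;
(C1) at most one component is `2`-edge-rooted;
(C2) every other component is `0`- or `1`-edge-rooted;
(C3) the parity condition on the path joining the two roots. -/
def Is2ERF (mult : P.Ered → ℕ) : Prop :=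
  IsAcyclic P.endsRed (P.mSupport mult) ∧
  (∀ v : P.Vred, P.compCount mult v ≤ 2) ∧
  (∀ u v : P.Vred, P.compCount mult u = 2 → P.compCount mult v = 2 →
    Reachable P.endsRed (P.mSupport mult) u v) ∧
  (∀ v : P.Vred, P.compCount mult v = 2 → P.C3At mult v)

/-! ### Birooted forests -/

/-- `(F, R)` is a birooted forest of `G^{A,B}_red`:  `F` is a spanning forest,
the root set `R` contains `0̄`, every component of `F` contains at least one
root, no component contains three roots, at most one component contains two
roots, and a component with two roots has one root in `A` and the other in
`Ā ∪ {0̄}`. -/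
def IsBirootedForest (F : Finset P.Ered) (R : Set P.Vred) : Prop :=
  IsAcyclic P.endsRed F ∧
  (⊥ : P.Vred) ∈ R ∧
  (∀ v : P.Vred, ∃ r ∈ R, Reachable P.endsRed F v r) ∧
  (∀ r₁ ∈ R, ∀ r₂ ∈ R, ∀ r₃ ∈ R, r₁ ≠ r₂ → r₁ ≠ r₃ → r₂ ≠ r₃ →
    Reachable P.endsRed F r₁ r₂ → Reachable P.endsRed F r₁ r₃ → False) ∧
  (∀ r₁ ∈ R, ∀ r₂ ∈ R, ∀ r₃ ∈ R, ∀ r₄ ∈ R, r₁ ≠ r₂ → r₃ ≠ r₄ →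
    Reachable P.endsRed F r₁ r₂ → Reachable P.endsRed F r₃ r₄ →
    Reachable P.endsRed F r₁ r₃) ∧
  (∀ r₁ ∈ R, ∀ r₂ ∈ R, r₁ ≠ r₂ → Reachable P.endsRed F r₁ r₂ →
    (P.InA r₁ ∧ ¬ P.InA r₂) ∨ (P.InA r₂ ∧ ¬ P.InA r₁))

/-! ### Internal activity and the edge order -/

/-- `e` is internally passive in the spanning tree `T`:  it can be exchanged
for a strictly smaller edge `f` so that the result is again a spanning tree. -/
def InternallyPassive (ord : LinearOrder P.EB) (T : Finset P.EB) (e : P.EB) : Prop :=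
  e ∈ T ∧ ∃ f : P.EB, ord.lt f e ∧ IsSpanningTree P.endsB (insert f (T.erase e))

/-- `e` is internally active in the spanning tree `T`. -/
def InternallyActive (ord : LinearOrder P.EB) (T : Finset P.EB) (e : P.EB) : Prop :=
  e ∈ T ∧ ¬ ∃ f : P.EB, ord.lt f e ∧ IsSpanningTree P.endsB (insert f (T.erase e))

/-- The number of internally passive edges of `T`. -/
def ipCount (ord : LinearOrder P.EB) (T : Finset P.EB) : ℕ :=
  (T.filter fun e => P.InternallyPassive ord T e).card

/-- The smaller endpoint of an edge of `G^{A,B}`. -/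
def endMin (e : P.EB) : P.W := Sym2.lift ⟨fun a b => a ⊓ b, fun a b => inf_comm a b⟩ (P.endsB e)
/-- The larger endpoint of an edge of `G^{A,B}`. -/
def endMax (e : P.EB) : P.W := Sym2.lift ⟨fun a b => a ⊔ b, fun a b => sup_comm a b⟩ (P.endsB e)

/-- The endpoints of an edge, as an ordered pair in the lexicographic square
of the vertex order `0 < 0̄ < 1 < ⋯ < m < 1̄ < ⋯ < n̄`. -/
def lexEnds (e : P.EB) : P.W ×ₗ P.W := toLex (P.endMin e, P.endMax e)

/-- A linear order on the edges of `G^{A,B}` is admissible if it refines the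
lexicographic order on endpoints (so parallel edges are ordered arbitrarily). -/
def AdmissibleOrder (ord : LinearOrder P.EB) : Prop :=
  ∀ e f : P.EB, P.lexEnds e < P.lexEnds f → ord.lt e f

/-- `v` is a connecting vertex of `T`:  `v ∈ A` and `v` is adjacent to `0` in
`T`, or `v ∈ Ā` and `v` is adjacent to `0̄` in `T`. -/
def ConnVertex (T : Finset P.EB) (v : P.Vred) : Prop :=
  (∃ a : Fin P.m, v = P.liftV (P.aVert a) ∧ P.eA a ∈ T) ∨
  (∃ b : Fin P.n, v = P.liftV (P.bVert b) ∧ P.eB b ∈ T)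

/-- `e` is a connecting edge of `T` (an edge `0a`, `a ∈ A`, or `0̄b`, `b ∈ Ā`)
with connecting vertex `v`. -/
def ConnEdge (T : Finset P.EB) (e : P.EB) (v : P.Vred) : Prop :=
  e ∈ T ∧ ((∃ a : Fin P.m, e = P.eA a ∧ v = P.liftV (P.aVert a)) ∨
           (∃ b : Fin P.n, e = P.eB b ∧ v = P.liftV (P.bVert b)))

/-! ### The h-vector -/

/-- `f_{i-1}`:  the number of acyclic edge sets of cardinality `i` in `G^{A,B}`. -/
def numAcyclic (i : ℕ) : ℕ :=
  Nat.card {F : Finset P.EB // IsAcyclic P.endsB F ∧ F.card = i}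

/-- The rank of the graphic matroid of `G^{A,B}`:  `|V| - 1 = m + n + 1`. -/
def d : ℕ := P.m + P.n + 1

/-- `h` is the h-vector of the graphic matroid of `G^{A,B}`:  it satisfies
`Σ_{i=0}^{d} f_{i-1} (t-1)^{d-i} = Σ_{k=0}^{d} h_k t^{d-k}`. -/
def IsHVector (h : ℕ → ℤ) : Prop :=
  ∑ i ∈ Finset.range (P.d + 1),
      Polynomial.C ((P.numAcyclic i : ℤ)) * (Polynomial.X - 1) ^ (P.d - i)
    = ∑ k ∈ Finset.range (P.d + 1), Polynomial.C (h k) * Polynomial.X ^ (P.d - k)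

end BiconedGraph

/-- `(h 0, …, h d)` is a pure O-sequence:  there is a multicomplex `M` of
multisets on a finite ground set (nonempty, closed under sub-multisets), all
of whose inclusion-maximal members have the same cardinality, whose members
all have cardinality at most `d`, and which has exactly `h i` members of
cardinality `i` for every `i ≤ d`. -/
def IsPureOSeq (d : ℕ) (h : ℕ → ℤ) : Prop :=
  ∃ (N : ℕ) (M : Set (Multiset (Fin N))),
    M.Nonempty ∧
    (∀ s ∈ M, ∀ t : Multiset (Fin N), t ≤ s → t ∈ M) ∧
    (∀ s ∈ M, ∀ t ∈ M, (∀ u ∈ M, s ≤ u → u = s) → (∀ u ∈ M, t ≤ u → u = t) →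
      Multiset.card s = Multiset.card t) ∧
    (∀ s ∈ M, Multiset.card s ≤ d) ∧
    (∀ i ≤ d, (Nat.card {s : Multiset (Fin N) // s ∈ M ∧ Multiset.card s = i} : ℤ) = h i)

/-!
Lowering multiplicities can only lower the number of roots of each component.  Hence a
`2`-edge-rooted component after the removal was already one before, with the same count, so it
keeps every root: `0̄`, and each edge of multiplicity at least `2` with that multiplicity.  These
roots keep the component connected, so the two ends of the parity path of (C3) stay joined, and
since the support is a forest no edge of that path can disappear either.
-/

namespace MWalk

variable {ε ν : Type} {ends : ε → Sym2 ν}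

lemma start_mem_support {u v : ν} (p : MWalk ends u v) : u ∈ p.support := by
  cases p <;> simp [support]

lemma mem_support_of_mem_edges :
    ∀ {u v : ν} (p : MWalk ends u v) {f : ε}, f ∈ p.edges →
      ∀ {w : ν}, w ∈ ends f → w ∈ p.support
  | _, _, nil _, _, hf, _, _ => by simp [edges] at hf
  | _, _, cons _ _ h p, _, hf, _, hw => by
      simp only [edges, List.mem_cons] at hf
      simp only [support, List.mem_cons]
      rcases hf with rfl | hf
      · rw [h, Sym2.mem_iff] at hw
        rcases hw with rfl | rfl
        exacts [Or.inl rfl, Or.inr p.start_mem_support]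
      · exact Or.inr (p.mem_support_of_mem_edges hf hw)

lemma IsPath.edges_nodup : ∀ {u v : ν} {p : MWalk ends u v}, p.IsPath → p.edges.Nodup
  | _, _, nil _, _ => by simp [edges]
  | u, _, cons e v h p, hp => by
      simp only [IsPath, support, List.nodup_cons] at hp
      refine List.nodup_cons.mpr ⟨fun he => hp.1 ?_, IsPath.edges_nodup hp.2⟩
      exact p.mem_support_of_mem_edges he (by rw [h]; exact Sym2.mem_mk_left u v)

lemma start_mem_ends_of_head?_eq {u v : ν} (p : MWalk ends u v) {f : ε}
    (hf : p.edges.head? = some f) : u ∈ ends f := by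
  cases p with
  | nil => simp [edges] at hf
  | cons e w h q =>
    simp only [edges, List.head?_cons, Option.some.injEq] at hf
    rw [← hf, h]
    exact Sym2.mem_mk_left _ _

lemma end_mem_ends_of_getLast?_eq {u v : ν} (p : MWalk ends u v) {f : ε}
    (hf : p.edges.getLast? = some f) : v ∈ ends f := by
  induction p with
  | nil => simp [edges] at hf
  | cons e w h q ih =>
    cases q with
    | nil =>
      simp only [edges, List.getLast?_singleton, Option.some.injEq] at hf
      rw [← hf, h]
      exact Sym2.mem_mk_right _ _
    | cons e' w' h' q' =>
      exact ih (by simpa only [edges, List.getLast?_cons_cons] using hf)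

lemma exists_edges_eq_append_cons : ∀ {u v : ν} (p : MWalk ends u v) {f : ε}, f ∈ p.edges →
    ∃ (a b : ν) (q : MWalk ends u a) (r : MWalk ends b v),
      ends f = s(a, b) ∧ p.edges = q.edges ++ f :: r.edges
  | _, _, nil _, _, hf => by simp [edges] at hf
  | u, _, cons e w h p, _, hf => by
      rcases List.mem_cons.mp hf with rfl | hf
      · exact ⟨u, w, nil u, p, h, rfl⟩
      · obtain ⟨a, b, q, r, hab, hsplit⟩ := p.exists_edges_eq_append_cons hf
        exact ⟨a, b, cons e w h q, r, hab, by simp [edges, hsplit]⟩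

end MWalk

section Reachable

variable {ε ν : Type} {ends : ε → Sym2 ν} {F F' : Finset ε}

lemma Reachable.refl (u : ν) : Reachable ends F u u :=
  ⟨MWalk.nil u, by simp [MWalk.edgesIn, MWalk.edges]⟩

lemma Reachable.cons {f : ε} {u v w : ν} (hf : f ∈ F) (h : ends f = s(u, v))
    (hr : Reachable ends F v w) : Reachable ends F u w := by
  obtain ⟨p, hp⟩ := hr
  refine ⟨MWalk.cons f v h p, fun g hg => ?_⟩
  rcases List.mem_cons.mp hg with rfl | hg
  exacts [hf, hp g hg]

lemma Reachable.trans {u v w : ν} (h₁ : Reachable ends F u v) (h₂ : Reachable ends F v w) :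
    Reachable ends F u w := by
  obtain ⟨p, hp⟩ := h₁
  induction p with
  | nil => exact h₂
  | cons f _ h q ih =>
    exact .cons (hp f List.mem_cons_self) h (ih h₂ fun g hg => hp g (List.mem_cons_of_mem _ hg))

lemma Reachable.symm {u v : ν} (h : Reachable ends F u v) : Reachable ends F v u := by
  obtain ⟨p, hp⟩ := h
  induction p with
  | nil => exact .refl _
  | cons f _ h q ih =>
    exact (ih fun g hg => hp g (List.mem_cons_of_mem _ hg)).trans
      (.cons (hp f List.mem_cons_self) (h.trans Sym2.eq_swap) (.refl _))

lemma Reachable.mono (hsub : F ⊆ F') {u v : ν} (h : Reachable ends F u v) :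
    Reachable ends F' u v := by
  obtain ⟨p, hp⟩ := h
  exact ⟨p, fun g hg => hsub (hp g hg)⟩

lemma Reachable.of_mem_ends {f : ε} {a b : ν} (hf : f ∈ F) (ha : a ∈ ends f)
    (hb : b ∈ ends f) : Reachable ends F a b := by
  by_cases hab : a = b
  · exact hab ▸ .refl a
  · exact .cons hf ((Sym2.mem_and_mem_iff hab).mp ⟨ha, hb⟩) (.refl b)

lemma MWalk.exists_mem_ends_reachable_of_mem_edges {u v : ν} (p : MWalk ends u v)
    (hp : p.edgesIn F) {f : ε} (hf : f ∈ p.edges) : ∃ a ∈ ends f, Reachable ends F u a := by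
  induction p with
  | nil => simp [MWalk.edges] at hf
  | @cons u _ e w h q ih =>
    have he : e ∈ F := hp e List.mem_cons_self
    rcases List.mem_cons.mp hf with rfl | hf
    · exact ⟨u, by rw [h]; exact Sym2.mem_mk_left _ _, .refl u⟩
    · obtain ⟨a, ha, hr⟩ := ih (fun g hg => hp g (List.mem_cons_of_mem _ hg)) hf
      exact ⟨a, ha, .cons he h hr⟩

lemma IsAcyclic.subset [DecidableEq ε] (h : IsAcyclic ends F) (hsub : F' ⊆ F) :
    IsAcyclic ends F' :=
  fun f hf u v huv hr => h f (hsub hf) u v huv (hr.mono (Finset.erase_subset_erase f hsub))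

lemma MWalk.notMem_edges_of_reachable_erase [DecidableEq ε] (hF : IsAcyclic ends F)
    {u v : ν} (p : MWalk ends u v) (hp : p.IsPath) (hpF : p.edgesIn F) {f : ε}
    (h : Reachable ends (F.erase f) u v) : f ∉ p.edges := by
  intro hf
  obtain ⟨a, b, q, r, hab, hsplit⟩ := p.exists_edges_eq_append_cons hf
  have hnodup := hp.edges_nodup
  rw [hsplit, List.nodup_middle, List.nodup_cons, List.mem_append, not_or] at hnodup
  have hq : Reachable ends (F.erase f) u a := ⟨q, fun g hg =>
    Finset.mem_erase.mpr ⟨ne_of_mem_of_not_mem hg hnodup.1.1, hpF g (by simp [hsplit, hg])⟩⟩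
  have hr : Reachable ends (F.erase f) b v := ⟨r, fun g hg =>
    Finset.mem_erase.mpr ⟨ne_of_mem_of_not_mem hg hnodup.1.2, hpF g (by simp [hsplit, hg])⟩⟩
  exact hF f (hpF f hf) a b hab (hq.symm.trans (h.trans hr.symm))

end Reachable

namespace BiconedGraph

variable {P : BiconedGraph}

lemma mem_mSupport {mult : P.Ered → ℕ} {f : P.Ered} :
    f ∈ P.mSupport mult ↔ mult f ≠ 0 := by
  simp [mSupport]

lemma mSupport_mono {mult mult' : P.Ered → ℕ} (hle : ∀ f, mult' f ≤ mult f) :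
    P.mSupport mult' ⊆ P.mSupport mult := fun f hf =>
  mem_mSupport.mpr fun h => mem_mSupport.mp hf (Nat.eq_zero_of_le_zero (h ▸ hle f))

section Touches

variable {F F' : Finset P.Ered} {u v : P.Vred} {f : P.Ered}

lemma Touches.of_reachable (h : Reachable P.endsRed F v u) (ht : P.Touches F u f) :
    P.Touches F v f := by
  obtain ⟨w, hw, hr⟩ := ht
  exact ⟨w, hw, h.trans hr⟩

lemma Touches.mono (hsub : F ⊆ F') (ht : P.Touches F v f) : P.Touches F' v f := by
  obtain ⟨w, hw, hr⟩ := ht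
  exact ⟨w, hw, hr.mono hsub⟩

lemma Touches.reachable (ht : P.Touches F v f) (hf : f ∈ F) {w : P.Vred}
    (hw : w ∈ P.endsRed f) : Reachable P.endsRed F v w := by
  obtain ⟨z, hz, hr⟩ := ht
  exact hr.trans (.of_mem_ends hf hz hw)

lemma touches_of_mem_edges {x y : P.Vred} (hvx : Reachable P.endsRed F v x)
    (p : MWalk P.endsRed x y) (hp : p.edgesIn F) (hf : f ∈ p.edges) : P.Touches F v f := by
  obtain ⟨a, ha, hr⟩ := p.exists_mem_ends_reachable_of_mem_edges hp hf
  exact ⟨a, ha, hvx.trans hr⟩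

end Touches

section Decrease

variable {mult mult' : P.Ered → ℕ} {v : P.Vred}

lemma compEdgeRoots_eq_sum (mult : P.Ered → ℕ) (v : P.Vred) :
    P.compEdgeRoots mult v =
      ∑ f, if P.Touches (P.mSupport mult) v f then mult f - 1 else 0 := by
  refine Finset.sum_subset (Finset.subset_univ _) fun f _ hf => ?_
  simp only [mem_mSupport, ne_eq, not_not] at hf
  simp [hf]

lemma compEdgeRoots_summand_le (hle : ∀ f, mult' f ≤ mult f) (f : P.Ered) :
    (if P.Touches (P.mSupport mult') v f then mult' f - 1 else 0) ≤
      if P.Touches (P.mSupport mult) v f then mult f - 1 else 0 := by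
  split_ifs with h' h
  · exact Nat.sub_le_sub_right (hle f) 1
  · exact absurd (h'.mono (mSupport_mono hle)) h
  all_goals exact Nat.zero_le _

lemma ite_reachable_bot_le (hle : ∀ f, mult' f ≤ mult f) :
    (if Reachable P.endsRed (P.mSupport mult') v ⊥ then 1 else 0) ≤
      if Reachable P.endsRed (P.mSupport mult) v ⊥ then 1 else 0 := by
  split_ifs with h' h
  exacts [le_rfl, absurd (h'.mono (mSupport_mono hle)) h, Nat.zero_le _, le_rfl]

lemma compCount_le_of_le (hle : ∀ f, mult' f ≤ mult f) (v : P.Vred) :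
    P.compCount mult' v ≤ P.compCount mult v := by
  rw [compCount, compCount, compEdgeRoots_eq_sum, compEdgeRoots_eq_sum]
  exact add_le_add (Finset.sum_le_sum fun f _ => compEdgeRoots_summand_le hle f)
    (ite_reachable_bot_le hle)

lemma compCount_summands_eq_of_eq (hle : ∀ f, mult' f ≤ mult f)
    (hv : P.compCount mult' v = P.compCount mult v) :
    (∀ f, (if P.Touches (P.mSupport mult') v f then mult' f - 1 else 0) =
      if P.Touches (P.mSupport mult) v f then mult f - 1 else 0) ∧
    (Reachable P.endsRed (P.mSupport mult) v ⊥ →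
      Reachable P.endsRed (P.mSupport mult') v ⊥) := by
  rw [compCount, compCount, compEdgeRoots_eq_sum, compEdgeRoots_eq_sum] at hv
  have hsummand := fun f (_ : f ∈ Finset.univ) => compEdgeRoots_summand_le (v := v) hle f
  obtain ⟨hsum, hbot⟩ := (add_eq_add_iff_eq_and_eq (Finset.sum_le_sum hsummand)
    (ite_reachable_bot_le hle)).mp hv
  refine ⟨fun f => (Finset.sum_eq_sum_iff_of_le hsummand).mp hsum f (Finset.mem_univ f),
    fun hR => ?_⟩
  by_contra hR'
  simp [hR, hR'] at hbot

lemma touches_and_mult_eq_of_compCount_eq (hle : ∀ f, mult' f ≤ mult f)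
    (hv : P.compCount mult' v = P.compCount mult v) {f : P.Ered}
    (ht : P.Touches (P.mSupport mult) v f) (h2 : 2 ≤ mult f) :
    P.Touches (P.mSupport mult') v f ∧ mult' f = mult f := by
  have hf := (compCount_summands_eq_of_eq hle hv).1 f
  rw [if_pos ht] at hf
  by_cases ht' : P.Touches (P.mSupport mult') v f
  · rw [if_pos ht'] at hf
    exact ⟨ht', by omega⟩
  · rw [if_neg ht'] at hf
    omega

lemma reachable_of_touches_of_compCount_eq (hle : ∀ f, mult' f ≤ mult f)
    (hv : P.compCount mult' v = P.compCount mult v) {f : P.Ered}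
    (ht : P.Touches (P.mSupport mult) v f) (h2 : 2 ≤ mult f) {w : P.Vred}
    (hw : w ∈ P.endsRed f) : Reachable P.endsRed (P.mSupport mult') v w := by
  obtain ⟨ht', hf⟩ := touches_and_mult_eq_of_compCount_eq hle hv ht h2
  exact ht'.reachable (mem_mSupport.mpr (by omega)) hw

lemma reachable_bot_or_exists_touches_of_compCount_ne_zero (hv : P.compCount mult v ≠ 0) :
    Reachable P.endsRed (P.mSupport mult) v ⊥ ∨
      ∃ f, P.Touches (P.mSupport mult) v f ∧ 2 ≤ mult f := by
  by_cases hR : Reachable P.endsRed (P.mSupport mult) v ⊥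
  · exact .inl hR
  rw [compCount, if_neg hR, add_zero, compEdgeRoots] at hv
  obtain ⟨f, -, hf⟩ := Finset.exists_ne_zero_of_sum_ne_zero hv
  by_cases ht : P.Touches (P.mSupport mult) v f
  · rw [if_pos ht] at hf
    exact .inr ⟨f, ht, by omega⟩
  · exact absurd (if_neg ht) hf

/- A rooted component that keeps its count keeps its root (`0̄` or a doubled edge), and the
root holds the component together. -/
lemma reachable_of_compCount_eq (hle : ∀ f, mult' f ≤ mult f) {u : P.Vred}
    (hu : P.compCount mult' u = P.compCount mult u)
    (hv : P.compCount mult' v = P.compCount mult v) (hu0 : P.compCount mult u ≠ 0)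
    (huv : Reachable P.endsRed (P.mSupport mult) u v) :
    Reachable P.endsRed (P.mSupport mult') u v := by
  rcases reachable_bot_or_exists_touches_of_compCount_ne_zero hu0 with hR | ⟨f, ht, h2⟩
  · exact ((compCount_summands_eq_of_eq hle hu).2 hR).trans
      ((compCount_summands_eq_of_eq hle hv).2 (huv.symm.trans hR)).symm
  · have ⟨z, hz, _⟩ := ht
    exact (reachable_of_touches_of_compCount_eq hle hu ht h2 hz).trans
      (reachable_of_touches_of_compCount_eq hle hv (ht.of_reachable huv.symm) h2 hz).symm

/- An edge of multiplicity at least `2` keeps it by the count; an edge of multiplicity `1`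
cannot vanish, since the ends of the path stay joined and the support is a forest. -/
lemma mult_eq_of_mem_edges_of_compCount_eq (hle : ∀ f, mult' f ≤ mult f)
    (hac : IsAcyclic P.endsRed (P.mSupport mult))
    (hv : P.compCount mult' v = P.compCount mult v) {x y : P.Vred}
    (p : MWalk P.endsRed x y) (hp : p.IsPath) (hpF : p.edgesIn (P.mSupport mult))
    (hvx : Reachable P.endsRed (P.mSupport mult) v x)
    (hxy : Reachable P.endsRed (P.mSupport mult') x y) {g : P.Ered} (hg : g ∈ p.edges) :
    mult' g = mult g := by
  by_cases h2 : 2 ≤ mult g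
  · exact (touches_and_mult_eq_of_compCount_eq hle hv (touches_of_mem_edges hvx p hpF hg) h2).2
  by_contra hne
  have hg0 : mult' g = 0 := by
    have := mem_mSupport.mp (hpF g hg)
    have := hle g
    omega
  have hsub : P.mSupport mult' ⊆ (P.mSupport mult).erase g := fun h hh =>
    Finset.mem_erase.mpr ⟨fun hhg => mem_mSupport.mp hh (hhg ▸ hg0), mSupport_mono hle hh⟩
  exact p.notMem_edges_of_reachable_erase hac hp hpF (hxy.mono hsub) hg

lemma C3At_of_compCount_eq (hle : ∀ f, mult' f ≤ mult f)
    (hac : IsAcyclic P.endsRed (P.mSupport mult))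
    (hv : P.compCount mult' v = P.compCount mult v) (hC3 : P.C3At mult v) :
    P.C3At mult' v := by
  have edgesIn_of_mult_eq : ∀ {x y : P.Vred} (p : MWalk P.endsRed x y),
      p.edgesIn (P.mSupport mult) → (∀ g ∈ p.edges, mult' g = mult g) →
      p.edgesIn (P.mSupport mult') := fun p hpF hpres g hg =>
    mem_mSupport.mpr ((hpres g hg).trans_ne (mem_mSupport.mp (hpF g hg)))
  refine ⟨fun hR' => ?_, fun hnR' => ?_⟩
  · have hR := hR'.mono (mSupport_mono hle)
    obtain ⟨x, p, hp, hpF, ⟨f, hf, h2⟩, hodd⟩ := hC3.1 hR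
    have hfp := List.mem_of_mem_getLast? hf
    have hvx := reachable_of_touches_of_compCount_eq hle hv
      (touches_of_mem_edges hR p hpF hfp) h2 (p.end_mem_ends_of_getLast?_eq hf)
    have hpres := fun g (hg : g ∈ p.edges) =>
      mult_eq_of_mem_edges_of_compCount_eq hle hac hv p hp hpF hR (hR'.symm.trans hvx) hg
    exact ⟨x, p, hp, edgesIn_of_mult_eq p hpF hpres, ⟨f, hf, (hpres f hfp).symm ▸ h2⟩,
      hodd⟩
  · have hnR := fun hR => hnR' ((compCount_summands_eq_of_eq hle hv).2 hR)
    obtain ⟨x, y, p, hp, hpF, hvx, ⟨f₁, hf₁, h₁⟩, ⟨f₂, hf₂, h₂⟩, hsingle, hodd⟩ :=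
      hC3.2 hnR
    have hf₁p := List.mem_of_mem_head? hf₁
    have hf₂p := List.mem_of_mem_getLast? hf₂
    have hvx' := reachable_of_touches_of_compCount_eq hle hv
      (touches_of_mem_edges hvx p hpF hf₁p) h₁ (p.start_mem_ends_of_head?_eq hf₁)
    have hvy' := reachable_of_touches_of_compCount_eq hle hv
      (touches_of_mem_edges hvx p hpF hf₂p) h₂ (p.end_mem_ends_of_getLast?_eq hf₂)
    have hpres := fun g (hg : g ∈ p.edges) =>
      mult_eq_of_mem_edges_of_compCount_eq hle hac hv p hp hpF hvx (hvx'.symm.trans hvy') hg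
    refine ⟨x, y, p, hp, edgesIn_of_mult_eq p hpF hpres, hvx',
      ⟨f₁, hf₁, (hpres f₁ hf₁p).symm ▸ h₁⟩, ⟨f₂, hf₂, (hpres f₂ hf₂p).symm ▸ h₂⟩,
      fun g hg => ?_, hodd⟩
    rw [hpres g (by simp [hg])]
    exact hsingle g hg

end Decrease

end BiconedGraph

open BiconedGraph

theorem twoEdgeRootedForests_multicomplex_general (P : BiconedGraph)
    (mult : P.Ered → ℕ) (hm : P.Is2ERF mult) (e : P.Ered) :
    P.Is2ERF (fun f => if f = e then mult e - 1 else mult f) := by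
  set mult' : P.Ered → ℕ := fun f => if f = e then mult e - 1 else mult f
  obtain ⟨hac, hle2, hunique, hC3⟩ := hm
  have hle : ∀ f, mult' f ≤ mult f := fun f => by
    by_cases hf : f = e <;> simp [mult', hf]
  have htwo : ∀ v, P.compCount mult' v = 2 → P.compCount mult v = 2 :=
    fun v hv => le_antisymm (hle2 v) (hv ▸ compCount_le_of_le hle v)
  refine ⟨hac.subset (mSupport_mono hle), fun v => (compCount_le_of_le hle v).trans (hle2 v),
    fun u v hu hv => ?_, fun v hv => ?_⟩
  · exact reachable_of_compCount_eq hle (hu.trans (htwo u hu).symm) (hv.trans (htwo v hv).symm)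
      (by simp [htwo u hu]) (hunique u v (htwo u hu) (htwo v hv))
  · exact C3At_of_compCount_eq hle hac (hv.trans (htwo v hv).symm) (hC3 v (htwo v hv))

/-- Lemma 4.3.  The collection of 2-edge-rooted forests of
`G^{A,B}_red` is a multicomplex on the edge set of `G^{A,B}_red`:  removing
one copy of one edge from a 2-edge-rooted forest again yields a
2-edge-rooted forest. -/
theorem twoEdgeRootedForests_multicomplex (P : BiconedGraph)
    (mult : P.Ered → ℕ) (hm : P.Is2ERF mult) (e : P.Ered) (he : 0 < mult e) :
    P.Is2ERF (fun f => if f = e then mult e - 1 else mult f) :=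
  twoEdgeRootedForests_multicomplex_general P mult hm e

end

end BiconedPaper
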